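/- Let B and C be strict bicategories and let F, G be lax functors from B to C such that all unit comparison 2-cells F.mapId b and G.mapId b are invertible. Suppose given, for every object b of B, a 1-cell σ_b : F.obj b ⟶ G.obj b, and, for every 1-cell k : b ⟶ b' of B, an invertible 2-cell τ_k : F.map k ≫ σ_{b'} ⟶ σ_b ≫ G.map k, such that for all composable 1-cells k : b ⟶ b' and k' : b' ⟶ b'' the compatibility with the composition comparisons holds: (F.map k ◁ τ_{k'}) ≫ (τ_k ▷ G.map k') ≫ (σ_b ◁ G.mapComp k k') = (F.mapComp k k' ▷ σ_{b''}) ≫ τ_{k ≫ k'} (written under the strict identifications). Then the unit compatibility holds automatically: for every object b, (F.mapId b ▷ σ_b) ≫ τ_{𝟙 b} = σ_b ◁ G.mapId b. (This is the paper's claim that for lax unitary quasi-functors with invertible interchange 2-cells the axiom ((1_B, K)) is redundant, carried out in the underlying horizontal 2-category.) -/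

import Mathlib

open CategoryTheory CategoryTheory.Bicategory

universe w₁ v₁ u₁ w₂ v₂ u₂

/-!
On the identity of `b`, the lax functors give monads `F.map (𝟙 b)` and `G.map (𝟙 b)` in `C`, and
`(σ b, τ (𝟙 b))` is a 1-cell between them compatible with the multiplications. Whiskering that
compatibility with the unit of `F.map (𝟙 b)` and using its left unit law shows, after cancelling
the epimorphism `τ (𝟙 b)`, that `X := (F.mapId b ▷ σ b) ≫ τ (𝟙 b)` satisfies
`(X ▷ G.map (𝟙 b)) ≫ (σ b ◁ μ) = 𝟙`, with `μ` the multiplication of `G.map (𝟙 b)`.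
Any such `X` equals `σ b ◁ G.mapId b`: by the right unit law of `G.map (𝟙 b)` and the
interchange law, `X = (σ b ◁ G.mapId b) ≫ (X ▷ G.map (𝟙 b)) ≫ (σ b ◁ μ)`.
-/

namespace CategoryTheory.Bicategory.Strict

variable {C : Type u₂} [Bicategory.{w₂, v₂} C] [Bicategory.Strict C]

lemma eq_whiskerLeft_unit_of_whiskerRight_comp_mul {a c : C} {m : c ⟶ c}
    (u : 𝟙 c ⟶ m) (μ : m ≫ m ⟶ m) (hu : m ◁ u ≫ μ = eqToHom (by simp))
    {s : a ⟶ c} (X : s ⟶ s ≫ m) (hX : X ▷ m ≫ eqToHom (by simp) ≫ s ◁ μ = 𝟙 _) :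
    X = eqToHom (by simp) ≫ s ◁ u := by
  calc X = X ≫ eqToHom (by simp) ≫ s ◁ (m ◁ u ≫ μ) := by simp [hu]
    _ = eqToHom (by simp) ≫ (X ▷ 𝟙 c ≫ (s ≫ m) ◁ u) ≫ eqToHom (by simp) ≫ s ◁ μ := by
      simp [Strict.associator_eqToIso, Strict.rightUnitor_eqToIso]
    _ = eqToHom (by simp) ≫ s ◁ u ≫ X ▷ m ≫ eqToHom (by simp) ≫ s ◁ μ := by
      rw [← whisker_exchange, Category.assoc]
    _ = _ := by rw [hX, Category.comp_id (s ◁ u)]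

lemma whiskerRight_unit_comp_eq_whiskerLeft_unit {x y : C} {f : x ⟶ x} {m : y ⟶ y} {s : x ⟶ y}
    {uf : 𝟙 x ⟶ f} {μf : f ≫ f ⟶ f} (huf : uf ▷ f ≫ μf = eqToHom (by simp))
    {um : 𝟙 y ⟶ m} {μm : m ≫ m ⟶ m} (hum : m ◁ um ≫ μm = eqToHom (by simp))
    (t : f ≫ s ⟶ s ≫ m) [Epi t]
    (ht : f ◁ t ≫ eqToHom (by simp) ≫ t ▷ m ≫ eqToHom (by simp) ≫ s ◁ μm =
      eqToHom (by simp) ≫ μf ▷ s ≫ t) :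
    uf ▷ s ≫ t = eqToHom (by simp) ≫ s ◁ um := by
  have hX : (eqToHom (by simp) ≫ uf ▷ s ≫ t) ▷ m ≫ eqToHom (by simp) ≫ s ◁ μm = 𝟙 _ := by
    refine (cancel_epi t).1 ?_
    calc t ≫ (eqToHom (by simp) ≫ uf ▷ s ≫ t) ▷ m ≫ eqToHom (by simp) ≫ s ◁ μm
        = eqToHom (by simp) ≫ uf ▷ (f ≫ s) ≫
            f ◁ t ≫ eqToHom (by simp) ≫ t ▷ m ≫ eqToHom (by simp) ≫ s ◁ μm := by
          rw [← whisker_exchange_assoc]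
          simp [Strict.associator_eqToIso, Strict.leftUnitor_eqToIso]
      _ = eqToHom (by simp) ≫ uf ▷ (f ≫ s) ≫ eqToHom (by simp) ≫ μf ▷ s ≫ t := by rw [ht]
      _ = t ≫ 𝟙 _ := by simp [Strict.associator_eqToIso, ← comp_whiskerRight_assoc, huf]
  have h := eq_whiskerLeft_unit_of_whiskerRight_comp_mul um μm hum _ hX
  rwa [eqToHom_comp_iff, eqToHom_trans_assoc] at h

end CategoryTheory.Bicategory.Strict

namespace CategoryTheory.LaxFunctor

variable {B : Type u₁} [Bicategory.{w₁, v₁} B] [Bicategory.Strict B]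
  {C : Type u₂} [Bicategory.{w₂, v₂} C] [Bicategory.Strict C] (F : LaxFunctor B C)

lemma mapId_whiskerRight_comp_mapComp' {a b : B} (f : a ⟶ b) :
    F.mapId a ▷ F.map f ≫ F.mapComp' (𝟙 a) f f = eqToHom (by simp) := by
  have h := (F.map₂_leftUnitor_hom f).symm
  simp only [Strict.leftUnitor_eqToIso, eqToIso.hom, PrelaxFunctor.map₂_eqToHom,
    ← Category.assoc, comp_eqToHom_iff, eqToHom_trans] at h
  rw [mapComp', PrelaxFunctor.map₂_eqToHom, ← Category.assoc, h, eqToHom_trans]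

lemma whiskerLeft_mapId_comp_mapComp' {a b : B} (f : a ⟶ b) :
    F.map f ◁ F.mapId b ≫ F.mapComp' f (𝟙 b) f = eqToHom (by simp) := by
  have h := (F.map₂_rightUnitor_hom f).symm
  simp only [Strict.rightUnitor_eqToIso, eqToIso.hom, PrelaxFunctor.map₂_eqToHom,
    ← Category.assoc, comp_eqToHom_iff, eqToHom_trans] at h
  rw [mapComp', PrelaxFunctor.map₂_eqToHom, ← Category.assoc, h, eqToHom_trans]

end CategoryTheory.LaxFunctor

/-- For lax functors `F G : B ⟶ C` between strict bicategories whose unit comparison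
2-cells are invertible, a family of 1-cells `σ_b : F.obj b ⟶ G.obj b` together with
invertible 2-cells `τ_k : F.map k ≫ σ_{b'} ⟶ σ_b ≫ G.map k` compatible with the
composition comparison 2-cells is automatically compatible with the unit comparison
2-cells: `(F.mapId b ▷ σ b) ≫ τ (𝟙 b) = σ b ◁ G.mapId b` (written under the strict
identifications, realized by `eqToHom`). -/
theorem unit_compatibility_redundant
    {B : Type u₁} [Bicategory.{w₁, v₁} B] [Bicategory.Strict B]
    {C : Type u₂} [Bicategory.{w₂, v₂} C] [Bicategory.Strict C]
    (F G : LaxFunctor B C)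
    (σ : ∀ b : B, F.obj b ⟶ G.obj b)
    (τ : ∀ {b b' : B} (k : b ⟶ b'), F.map k ≫ σ b' ⟶ σ b ≫ G.map k)
    (hτ : ∀ {b b' : B} (k : b ⟶ b'), IsIso (τ k))
    (hcomp : ∀ {b b' b'' : B} (k : b ⟶ b') (k' : b' ⟶ b''),
      (F.map k ◁ τ k') ≫ eqToHom (by simp) ≫ (τ k ▷ G.map k') ≫ eqToHom (by simp) ≫
          (σ b ◁ G.mapComp k k') =
        eqToHom (by simp) ≫ (F.mapComp k k' ▷ σ b'') ≫ τ (k ≫ k')) :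
    ∀ b : B, (F.mapId b ▷ σ b) ≫ τ (𝟙 b) = eqToHom (by simp) ≫ (σ b ◁ G.mapId b) := by
  intro b
  have hcomp' : ∀ {b b' b'' : B} (k : b ⟶ b') (k' : b' ⟶ b'') (kk' : b ⟶ b'')
      (h : k ≫ k' = kk'),
      (F.map k ◁ τ k') ≫ eqToHom (by simp) ≫ (τ k ▷ G.map k') ≫ eqToHom (by simp) ≫
          (σ b ◁ G.mapComp' k k' kk' h) =
        eqToHom (by simp) ≫ (F.mapComp' k k' kk' h ▷ σ b'') ≫ τ kk' := by
    rintro _ _ _ k k' _ rfl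
    simpa only [LaxFunctor.mapComp'_eq_mapComp] using hcomp k k'
  have := hτ (𝟙 b)
  exact Strict.whiskerRight_unit_comp_eq_whiskerLeft_unit (F.mapId_whiskerRight_comp_mapComp' _)
    (G.whiskerLeft_mapId_comp_mapComp' _) (τ (𝟙 b)) (hcomp' (𝟙 b) (𝟙 b) (𝟙 b) (by simp))
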